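/- arXiv:2412.11604 — 5 statements merged into one kernel-verified Lean document; each statement's English description precedes it below -/
import Mathlib

section
/- Let c > 0 be real, γ ∈ ℝ, and s ∈ ℂ with Re(s) > 0. Then for every nonzero x ∈ ℝ, the convolution of the GL(1) Hecke–Baxter kernel Q_{s,c}(y) = |y|^s e^{-y²/(2c)} with the character Φ_γ(y) = |y|^{iγ} against the Haar measure dy/|y| on ℝ∖{0} satisfies ∫_{ℝ∖{0}} |y|^s e^{-y²/(2c)} |x·y^{-1}|^{iγ} dy/|y| = (2c)^{(s-iγ)/2} · Γ((s-iγ)/2) · |x|^{iγ}, where Γ is the complex Gamma function and all powers of positive reals are principal complex powers. -/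
/-!
Writing `w = iγ`, the character splits as `|x y⁻¹|^w = |x|^w / |y|^w`, so `|x|^w` factors out and
what remains is the integral over `ℝ` of the even function `|y|^(s - w - 1) e^{-y²/(2c)}`. That is
twice the Mellin transform of the Gaussian at `s - w`, and the substitution `u = t²` turns the
latter into the Gamma integral at `(s - w)/2` with scale `2c`.
-/

open MeasureTheory Set Complex

theorem integral_comp_abs_eq_two_smul {E : Type*} [NormedAddCommGroup E] [NormedSpace ℝ E]
    (f : ℝ → E) : ∫ x, f |x| = (2 : ℝ) • ∫ x in Ioi 0, f x := by
  have h_Ioi : ∫ x in Ioi 0, f |x| = ∫ x in Ioi 0, f x :=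
    setIntegral_congr_fun measurableSet_Ioi fun x hx ↦ by rw [abs_of_pos (mem_Ioi.mp hx)]
  by_cases hf : IntegrableOn (fun x ↦ f |x|) (Ioi 0)
  · have h_Iic : IntegrableOn (fun x ↦ f |x|) (Iic 0) := by
      have h_neg : MeasurableEmbedding fun x : ℝ ↦ -x := (Homeomorph.neg ℝ).measurableEmbedding
      rw [← Measure.map_neg_eq_self (volume : Measure ℝ), h_neg.integrableOn_map_iff]
      simpa [Function.comp_def] using
        (integrableOn_Ici_iff_integrableOn_Ioi (f := fun x ↦ f |x|)).mpr hf
    have h_Iic_eq : ∫ x in Iic 0, f |x| = ∫ x in Ioi 0, f x := by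
      rw [← h_Ioi, ← neg_zero, ← integral_comp_neg_Iic, neg_zero]
      exact setIntegral_congr_fun measurableSet_Iic fun x _ ↦ by rw [abs_neg]
    rw [← setIntegral_univ, ← Iic_union_Ioi (a := (0 : ℝ)),
      setIntegral_union (Iic_disjoint_Ioi le_rfl) measurableSet_Ioi h_Iic hf, h_Iic_eq, h_Ioi,
      two_smul]
  · have : ¬ Integrable fun x ↦ f |x| := fun h ↦ hf h.integrableOn
    rw [← h_Ioi, integral_undef hf, integral_undef this, smul_zero]

theorem mellin_cexp_neg_mul_sq {r : ℝ} (hr : 0 < r) {s : ℂ} (hs : 0 < s.re) :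
    mellin (fun t : ℝ ↦ cexp (-(r * t ^ 2))) s = (1 / r) ^ (s / 2) * Gamma (s / 2) / 2 := by
  have h_sq : EqOn (fun t : ℝ ↦ (t : ℂ) ^ (s - 1) • cexp (-(r * t ^ 2)))
      (fun t : ℝ ↦ (t : ℂ) ^ (s - 1) • cexp (-(r * ↑(t ^ (2 : ℝ))))) (Ioi 0) := fun t _ ↦ by
    simp
  rw [mellin, setIntegral_congr_fun measurableSet_Ioi h_sq, ← mellin,
    mellin_comp_rpow (fun u ↦ cexp (-(r * u))), mellin]
  simp only [smul_eq_mul]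
  rw [integral_cpow_mul_exp_neg_mul_Ioi (by simpa using half_pos hs) hr]
  simp only [Nat.abs_ofNat, one_div, ofReal_ofNat, real_smul, ofReal_inv]
  ring

theorem ofReal_abs_mul_inv_cpow (x y : ℝ) (w : ℂ) :
    ((|x * y⁻¹| : ℝ) : ℂ) ^ w = ((|x| : ℝ) : ℂ) ^ w / ((|y| : ℝ) : ℂ) ^ w := by
  rw [abs_mul, abs_inv, ← div_eq_mul_inv, ofReal_div,
    div_cpow_ofReal_nonneg (abs_nonneg x) (abs_nonneg y)]

theorem stmt_0_general (c : ℝ) (hc : 0 < c) (γ : ℝ) (s : ℂ) (hs : 0 < s.re)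
    (x : ℝ) :
    ∫ y in ({0}ᶜ : Set ℝ),
      (((|y| : ℝ) : ℂ) ^ s * Complex.exp (-(y : ℂ) ^ 2 / (2 * (c : ℂ))) *
          ((|x * y⁻¹| : ℝ) : ℂ) ^ (Complex.I * (γ : ℂ))) / ((|y| : ℝ) : ℂ)
      = (2 * (c : ℂ)) ^ ((s - Complex.I * (γ : ℂ)) / 2) *
          Complex.Gamma ((s - Complex.I * (γ : ℂ)) / 2) *
          ((|x| : ℝ) : ℂ) ^ (Complex.I * (γ : ℂ)) := by
  set w := I * γ
  have hw : 0 < (s - w).re := by simpa [w] using hs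
  let G : ℝ → ℂ := fun t ↦ cexp (-(((2 * c)⁻¹ : ℝ) * (t : ℂ) ^ 2))
  have h_kernel : ∀ y ∈ ({0}ᶜ : Set ℝ),
      (((|y| : ℝ) : ℂ) ^ s * cexp (-(y : ℂ) ^ 2 / (2 * c)) * ((|x * y⁻¹| : ℝ) : ℂ) ^ w) /
        ((|y| : ℝ) : ℂ)
      = ((|x| : ℝ) : ℂ) ^ w * (((|y| : ℝ) : ℂ) ^ (s - w - 1) • G |y|) := by
    intro y hy
    have hy : ((|y| : ℝ) : ℂ) ≠ 0 := by simpa using hy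
    have h_gauss : -(y : ℂ) ^ 2 / (2 * c) = -(((2 * c)⁻¹ : ℝ) * ((|y| : ℝ) : ℂ) ^ 2) := by
      rw [← ofReal_pow |y|, sq_abs]
      push_cast
      ring
    rw [ofReal_abs_mul_inv_cpow, cpow_sub _ _ hy, cpow_sub _ _ hy, cpow_one, smul_eq_mul, h_gauss]
    ring
  calc _ = ((|x| : ℝ) : ℂ) ^ w * ∫ y : ℝ, ((|y| : ℝ) : ℂ) ^ (s - w - 1) • G |y| := by
        rw [setIntegral_congr_fun (measurableSet_singleton 0).compl h_kernel,
          restrict_compl_singleton, integral_const_mul]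
    _ = ((|x| : ℝ) : ℂ) ^ w * (2 : ℝ) • mellin G (s - w) := by
        rw [integral_comp_abs_eq_two_smul fun t ↦ (t : ℂ) ^ (s - w - 1) • G t]
        rfl
    _ = _ := by
        rw [mellin_cexp_neg_mul_sq (by positivity) hw, one_div, ofReal_inv, inv_inv, real_smul]
        push_cast
        ring

/-- The convolution of the GL(1) Hecke–Baxter kernel `Q_{s,c}(y) = |y|^s e^{-y²/(2c)}`
with the character `Φ_γ(y) = |y|^{iγ}` against the Haar measure `dy/|y|` on `ℝ ∖ {0}`
equals `(2c)^{(s-iγ)/2} Γ((s-iγ)/2) |x|^{iγ}`. -/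
theorem stmt_0 (c : ℝ) (hc : 0 < c) (γ : ℝ) (s : ℂ) (hs : 0 < s.re)
    (x : ℝ) (hx : x ≠ 0) :
    ∫ y in ({0}ᶜ : Set ℝ),
      (((|y| : ℝ) : ℂ) ^ s * Complex.exp (-(y : ℂ) ^ 2 / (2 * (c : ℂ))) *
          ((|x * y⁻¹| : ℝ) : ℂ) ^ (Complex.I * (γ : ℂ))) / ((|y| : ℝ) : ℂ)
      = (2 * (c : ℂ)) ^ ((s - Complex.I * (γ : ℂ)) / 2) *
          Complex.Gamma ((s - Complex.I * (γ : ℂ)) / 2) *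
          ((|x| : ℝ) : ℂ) ^ (Complex.I * (γ : ℂ)) :=
  stmt_0_general c hc γ s hs x
end

section
/- Let A be an associative ℂ-algebra with unit, n ≥ 1, and write [a,b] = ab - ba. Suppose given elements e^R_{ij}, X_{ij}, Y_{ij} ∈ A (1 ≤ i,j ≤ n) and an invertible element C ∈ A such that: [X_{ij},X_{kl}] = 0, [Y_{ij},Y_{kl}] = 0, [X_{ij},Y_{kl}] = δ_{ik}δ_{jl}C, C commutes with all X_{ij}, Y_{ij} and e^R_{ij}, and [e^R_{ij}, X_{kl}] = δ_{jl}X_{ki}, [e^R_{ij}, Y_{kl}] = -δ_{il}Y_{kj}. Then the elements ê^R_{ij} := e^R_{ij} + C^{-1}·Σ_{m=1}^{n} X_{mi}Y_{mj} satisfy [ê^R_{ij}, X_{kl}] = 0 and [ê^R_{ij}, Y_{kl}] = 0 for all i,j,k,l. -/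
/-!
By the Leibniz rule and the Heisenberg relations, `Σ_m X_{mi} Y_{mj}` has the same brackets with
every `X_{kl}` and `Y_{kl}` as `-C e^R_{ij}`. Since `C` is invertible and commutes with the
`X`'s and `Y`'s, so does `C⁻¹`, and the brackets of `C⁻¹ Σ_m X_{mi} Y_{mj}` cancel those of
`e^R_{ij}`.
-/

section

-- Kept local: it gives a second instance path for `+` and `-` on `A`, which would change how
-- the statement of `stmt_3` elaborates.
attribute [local instance] LieRing.ofAssociativeRing

theorem Ring.mul_lie {R : Type*} [Ring R] (a b x : R) :
    ⁅a * b, x⁆ = a * ⁅b, x⁆ + ⁅a, x⁆ * b := by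
  simp only [Ring.lie_def]
  noncomm_ring

theorem Units.inv_mul_lie {R : Type*} [Ring R] {u : Rˣ} {x : R} (hux : ⁅(u : R), x⁆ = 0)
    (a : R) : ⁅(↑u⁻¹ : R) * a, x⁆ = ↑u⁻¹ * ⁅a, x⁆ := by
  have hinv : ⁅(↑u⁻¹ : R), x⁆ = 0 := (commute_iff_lie_eq.mpr hux).units_inv_left.lie_eq
  rw [Ring.mul_lie, hinv, zero_mul, add_zero]

namespace Heisenberg

variable {A ι : Type*} [Ring A] [Fintype ι] [DecidableEq ι] {X Y : ι → ι → A} {C : A}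

theorem sum_mul_lie_X (hXX : ∀ i j k l, ⁅X i j, X k l⁆ = 0)
    (hXY : ∀ i j k l, ⁅X i j, Y k l⁆ = if i = k ∧ j = l then C else 0) (i j k l : ι) :
    ⁅∑ m, X m i * Y m j, X k l⁆ = -if j = l then X k i * C else 0 := by
  have hYX (m : ι) : ⁅Y m j, X k l⁆ = -if k = m ∧ l = j then C else 0 := by
    rw [← hXY, lie_skew]
  simp only [sum_lie, Ring.mul_lie, hXX, zero_mul, add_zero, hYX]
  by_cases hjl : j = l <;> simp [hjl, eq_comm]

theorem sum_mul_lie_Y (hYY : ∀ i j k l, ⁅Y i j, Y k l⁆ = 0)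
    (hXY : ∀ i j k l, ⁅X i j, Y k l⁆ = if i = k ∧ j = l then C else 0) (i j k l : ι) :
    ⁅∑ m, X m i * Y m j, Y k l⁆ = if i = l then C * Y k j else 0 := by
  simp only [sum_lie, Ring.mul_lie, hYY, mul_zero, zero_add, hXY]
  by_cases hil : i = l <;> simp [hil]

variable {e : ι → ι → A} {u : Aˣ}

/-- The shifted right generator `ê^R_{ij} = e^R_{ij} + C⁻¹ Σ_m X_{mi} Y_{mj}`, with `C = ↑u`. -/
def shiftedGen (e X Y : ι → ι → A) (u : Aˣ) (i j : ι) : A :=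
  e i j + ↑u⁻¹ * ∑ m, X m i * Y m j

theorem shiftedGen_lie_X (hXX : ∀ i j k l, ⁅X i j, X k l⁆ = 0)
    (hXY : ∀ i j k l, ⁅X i j, Y k l⁆ = if i = k ∧ j = l then (u : A) else 0)
    (huX : ∀ i j, ⁅(u : A), X i j⁆ = 0)
    (heX : ∀ i j k l, ⁅e i j, X k l⁆ = if j = l then X k i else 0) (i j k l : ι) :
    ⁅shiftedGen e X Y u i j, X k l⁆ = 0 := by
  have hcancel : ↑u⁻¹ * (X k i * u) = X k i := by
    rw [← mul_assoc, (commute_iff_lie_eq.mpr (huX k i)).units_inv_left.eq,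
      Units.inv_mul_cancel_right]
  rw [shiftedGen, add_lie, Units.inv_mul_lie (huX k l), sum_mul_lie_X hXX hXY, heX]
  split_ifs <;> simp [hcancel]

theorem shiftedGen_lie_Y (hYY : ∀ i j k l, ⁅Y i j, Y k l⁆ = 0)
    (hXY : ∀ i j k l, ⁅X i j, Y k l⁆ = if i = k ∧ j = l then (u : A) else 0)
    (huY : ∀ i j, ⁅(u : A), Y i j⁆ = 0)
    (heY : ∀ i j k l, ⁅e i j, Y k l⁆ = -if i = l then Y k j else 0) (i j k l : ι) :
    ⁅shiftedGen e X Y u i j, Y k l⁆ = 0 := by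
  rw [shiftedGen, add_lie, Units.inv_mul_lie (huY k l), sum_mul_lie_Y hYY hXY, heY]
  split_ifs <;> simp

end Heisenberg

end

theorem stmt_3_general {A : Type*} [Ring A] (n : ℕ)
    (e X Y : Fin n → Fin n → A) (C Cinv : A)
    (hC : C * Cinv = 1) (hC' : Cinv * C = 1)
    (hXX : ∀ i j k l, X i j * X k l - X k l * X i j = 0)
    (hYY : ∀ i j k l, Y i j * Y k l - Y k l * Y i j = 0)
    (hXY : ∀ i j k l, X i j * Y k l - Y k l * X i j = if i = k ∧ j = l then C else 0)
    (hCX : ∀ i j, C * X i j - X i j * C = 0)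
    (hCY : ∀ i j, C * Y i j - Y i j * C = 0)
    (heX : ∀ i j k l, e i j * X k l - X k l * e i j = (if j = l then X k i else 0))
    (heY : ∀ i j k l, e i j * Y k l - Y k l * e i j = -(if i = l then Y k j else 0)) :
    ∀ i j k l,
      ((e i j + Cinv * ∑ m, X m i * Y m j) * X k l
          - X k l * (e i j + Cinv * ∑ m, X m i * Y m j) = 0) ∧
      ((e i j + Cinv * ∑ m, X m i * Y m j) * Y k l
          - Y k l * (e i j + Cinv * ∑ m, X m i * Y m j) = 0) := by
  let u : Aˣ := ⟨C, Cinv, hC, hC'⟩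
  -- every hypothesis and both goals are `⁅a, b⁆ = …` with the bracket unfolded
  exact fun i j k l =>
    ⟨Heisenberg.shiftedGen_lie_X (u := u) hXX hXY hCX heX i j k l,
      Heisenberg.shiftedGen_lie_Y (u := u) hYY hXY hCY heY i j k l⟩

/-- In an associative ℂ-algebra with Heisenberg generators `X_{ij}, Y_{ij}, C`
(`C` invertible, central) and right `𝔤𝔩`-generators `e^R_{ij}` with
`[e^R_{ij}, X_{kl}] = δ_{jl}X_{ki}`, `[e^R_{ij}, Y_{kl}] = -δ_{il}Y_{kj}`, the shifted
generators `ê^R_{ij} = e^R_{ij} + C⁻¹ Σ_m X_{mi} Y_{mj}` commute with all `X_{kl}`, `Y_{kl}`. -/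
theorem stmt_3 {A : Type*} [Ring A] [Algebra ℂ A] (n : ℕ) (hn : 1 ≤ n)
    (e X Y : Fin n → Fin n → A) (C Cinv : A)
    (hC : C * Cinv = 1) (hC' : Cinv * C = 1)
    (hXX : ∀ i j k l, X i j * X k l - X k l * X i j = 0)
    (hYY : ∀ i j k l, Y i j * Y k l - Y k l * Y i j = 0)
    (hXY : ∀ i j k l, X i j * Y k l - Y k l * X i j = if i = k ∧ j = l then C else 0)
    (hCX : ∀ i j, C * X i j - X i j * C = 0)
    (hCY : ∀ i j, C * Y i j - Y i j * C = 0)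
    (hCe : ∀ i j, C * e i j - e i j * C = 0)
    (heX : ∀ i j k l, e i j * X k l - X k l * e i j = (if j = l then X k i else 0))
    (heY : ∀ i j k l, e i j * Y k l - Y k l * e i j = -(if i = l then Y k j else 0)) :
    ∀ i j k l,
      ((e i j + Cinv * ∑ m, X m i * Y m j) * X k l
          - X k l * (e i j + Cinv * ∑ m, X m i * Y m j) = 0) ∧
      ((e i j + Cinv * ∑ m, X m i * Y m j) * Y k l
          - Y k l * (e i j + Cinv * ∑ m, X m i * Y m j) = 0) :=
  stmt_3_general n e X Y C Cinv hC hC' hXX hYY hXY hCX hCY heX heY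
end

section
/- Let A be an associative ℂ-algebra with unit, n ≥ 1, and write [a,b] = ab - ba. Suppose given elements e^L_{ij}, e^R_{ij}, X_{ij}, Y_{ij} ∈ A (1 ≤ i,j ≤ n) and an invertible element C ∈ A satisfying: [X_{ij},X_{kl}] = 0, [Y_{ij},Y_{kl}] = 0, [X_{ij},Y_{kl}] = δ_{ik}δ_{jl}C, C commutes with all listed elements, [e^{L}_{ij}, e^{L}_{kl}] = δ_{jk}e^{L}_{il} - δ_{il}e^{L}_{kj}, [e^{R}_{ij}, e^{R}_{kl}] = δ_{jk}e^{R}_{il} - δ_{il}e^{R}_{kj}, [e^L_{ij}, e^R_{kl}] = 0, [e^L_{ij}, X_{kl}] = -δ_{ik}X_{jl}, [e^L_{ij}, Y_{kl}] = δ_{jk}Y_{il}, [e^R_{ij}, X_{kl}] = δ_{jl}X_{ki}, [e^R_{ij}, Y_{kl}] = -δ_{il}Y_{kj}. Define ê^L_{ij} := e^L_{ij} - C^{-1}Σ_m X_{jm}Y_{im} and ê^R_{ij} := e^R_{ij} + C^{-1}Σ_m X_{mi}Y_{mj}. Then [ê^L_{ij}, ê^L_{kl}] = δ_{jk}ê^L_{il}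 - δ_{il}ê^L_{kj}, [ê^R_{ij}, ê^R_{kl}] = δ_{jk}ê^R_{il} - δ_{il}ê^R_{kj}, and [ê^L_{ij}, ê^R_{kl}] = 0 for all i,j,k,l. -/
/-- The shifted left generator `ê^L_{ij} = e^L_{ij} - C⁻¹ Σ_m X_{jm} Y_{im}`. -/
def hatL {A : Type*} [Ring A] {n : ℕ} (e X Y : Fin n → Fin n → A) (Cinv : A)
    (i j : Fin n) : A :=
  e i j - Cinv * ∑ m, X j m * Y i m

/-- The shifted right generator `ê^R_{ij} = e^R_{ij} + C⁻¹ Σ_m X_{mi} Y_{mj}`. -/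
def hatR {A : Type*} [Ring A] {n : ℕ} (e X Y : Fin n → Fin n → A) (Cinv : A)
    (i j : Fin n) : A :=
  e i j + Cinv * ∑ m, X m i * Y m j

/-!
Subtracting `C⁻¹ Σ_m X_{jm} Y_{im}` from `e^L_{ij}` removes exactly its action on the Heisenberg
generators: the quadratic element brackets with `X` and `Y` as `C e^L_{ij}` does. Hence `ê^L_{ij}`
commutes with `X`, `Y` and `C⁻¹`, and therefore with the subtracted correction terms; so
`[ê^L_{ij}, ê^L_{kl}] = [e^L_{ij}, e^L_{kl}] - [C⁻¹ Σ_m X_{jm} Y_{im}, e^L_{kl}]`, and both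
brackets are given by the `𝔤𝔩_n` relations, because `e^L` acts on the quadratic elements through
its action on `X` and `Y`. The right generators are handled in the same way, and the mixed bracket
vanishes since `e^L` commutes with `e^R` and with `Σ_m X_{mk} Y_{ml}`.
-/

section

attribute [local instance] LieRing.ofAssociativeRing

variable {A : Type*} [Ring A]

namespace Ring

theorem lie_mul (a x y : A) : ⁅a, x * y⁆ = ⁅a, x⁆ * y + x * ⁅a, y⁆ := by
  simp only [Ring.lie_def]; noncomm_ring

theorem mul_lie_s4 (x y b : A) : ⁅x * y, b⁆ = x * ⁅y, b⁆ + ⁅x, b⁆ * y := by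
  simp only [Ring.lie_def]; noncomm_ring

end Ring

theorem Units.lie_inv_mul (c : Aˣ) {a x y : A}
    (hx : Commute (↑c⁻¹ : A) x) (h : ⁅a, x⁆ = c * y) : ⁅↑c⁻¹ * a, x⁆ = y := by
  rw [Ring.mul_lie_s4, h, hx.lie_eq, zero_mul, add_zero, Units.inv_mul_cancel_left]

variable {n : ℕ}

def IsGlBracket (e u : Fin n → Fin n → A) : Prop :=
  ∀ i j k l, ⁅e i j, u k l⁆ = (if j = k then u i l else 0) - (if i = l then u k j else 0)

theorem IsGlBracket.mul_left {e u : Fin n → Fin n → A} {d : A} (h : IsGlBracket e u)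
    (hd : ∀ i j, Commute (e i j) d) : IsGlBracket e fun i j => d * u i j := by
  intro i j k l
  rw [Ring.lie_mul, (hd i j).lie_eq, zero_mul, zero_add, h, mul_sub, mul_ite, mul_ite, mul_zero]

theorem IsGlBracket.sub {e u : Fin n → Fin n → A} (he : IsGlBracket e e)
    (heu : IsGlBracket e u) (hcomm : ∀ i j k l, Commute (e i j - u i j) (u k l)) :
    IsGlBracket (e - u) (e - u) := by
  intro i j k l
  simp only [Pi.sub_apply]
  rw [lie_sub, (hcomm i j k l).lie_eq, sub_zero, sub_lie, ← lie_skew (u i j), he, heu]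
  simp only [eq_comm (a := l), eq_comm (a := k)]
  split_ifs <;> abel

def quadL (X Y : Fin n → Fin n → A) (i j : Fin n) : A := ∑ m, X j m * Y i m

def quadR (X Y : Fin n → Fin n → A) (i j : Fin n) : A := ∑ m, X m i * Y m j

theorem hatR_eq_sub (e X Y : Fin n → Fin n → A) (d : A) :
    hatR e X Y d = e - fun i j => -d * quadR X Y i j := by
  ext i j
  simp only [hatR, quadR, Pi.sub_apply, neg_mul, sub_neg_eq_add]

variable {X Y : Fin n → Fin n → A}

theorem commute_quadL {a : A} (h : ∀ k l, Commute a (X k l) ∧ Commute a (Y k l)) (i j : Fin n) :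
    Commute a (quadL X Y i j) :=
  Commute.sum_right _ _ _ fun m _ => (h j m).1.mul_right (h i m).2

theorem commute_quadR {a : A} (h : ∀ k l, Commute a (X k l) ∧ Commute a (Y k l)) (i j : Fin n) :
    Commute a (quadR X Y i j) :=
  Commute.sum_right _ _ _ fun m _ => (h m i).1.mul_right (h m j).2

theorem commute_mul_quad {a d : A} (ha : Commute a d)
    (h : ∀ k l, Commute a (X k l) ∧ Commute a (Y k l)) (k l : Fin n) :
    Commute a (d * quadL X Y k l) ∧ Commute a (-d * quadR X Y k l) :=
  ⟨ha.mul_right (commute_quadL h k l), ha.neg_right.mul_right (commute_quadR h k l)⟩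

/-- `a` brackets with `X` and `Y` as `e^L_{ij}` does. -/
def IsLeftGl (X Y : Fin n → Fin n → A) (i j : Fin n) (a : A) : Prop :=
  ∀ k l, ⁅a, X k l⁆ = -(if i = k then X j l else 0) ∧ ⁅a, Y k l⁆ = if j = k then Y i l else 0

/-- `b` brackets with `X` and `Y` as `e^R_{ij}` does. -/
def IsRightGl (X Y : Fin n → Fin n → A) (i j : Fin n) (b : A) : Prop :=
  ∀ k l, ⁅b, X k l⁆ = (if j = l then X k i else 0) ∧ ⁅b, Y k l⁆ = -(if i = l then Y k j else 0)

variable {i j : Fin n}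

theorem IsLeftGl.lie_quadL {a : A} (h : IsLeftGl X Y i j a) (k l : Fin n) :
    ⁅a, quadL X Y k l⁆
      = (if j = k then quadL X Y i l else 0) - (if i = l then quadL X Y k j else 0) := by
  simp only [quadL, lie_sum, Ring.lie_mul, (h _ _).1, (h _ _).2]
  split_ifs <;> simp [Finset.sum_add_distrib, sub_eq_neg_add]

theorem IsLeftGl.lie_quadR {a : A} (h : IsLeftGl X Y i j a) (k l : Fin n) :
    ⁅a, quadR X Y k l⁆ = 0 := by
  simp [quadR, lie_sum, Ring.lie_mul, (h _ _).1, (h _ _).2, Finset.sum_add_distrib, ite_mul,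
    mul_ite]

theorem IsRightGl.lie_quadR {b : A} (h : IsRightGl X Y i j b) (k l : Fin n) :
    ⁅b, quadR X Y k l⁆
      = (if j = k then quadR X Y i l else 0) - (if i = l then quadR X Y k j else 0) := by
  simp only [quadR, lie_sum, Ring.lie_mul, (h _ _).1, (h _ _).2]
  split_ifs <;> simp [Finset.sum_add_distrib, sub_eq_neg_add, add_comm]

theorem IsLeftGl.commute_sub {a b : A} (ha : IsLeftGl X Y i j a) (hb : IsLeftGl X Y i j b)
    (k l : Fin n) : Commute (a - b) (X k l) ∧ Commute (a - b) (Y k l) := by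
  simp only [commute_iff_lie_eq, sub_lie, (ha k l).1, (hb k l).1, (ha k l).2, (hb k l).2,
    sub_self, and_self]

theorem IsRightGl.commute_sub {a b : A} (ha : IsRightGl X Y i j a) (hb : IsRightGl X Y i j b)
    (k l : Fin n) : Commute (a - b) (X k l) ∧ Commute (a - b) (Y k l) := by
  simp only [commute_iff_lie_eq, sub_lie, (ha k l).1, (hb k l).1, (ha k l).2, (hb k l).2,
    sub_self, and_self]

structure IsHeisenberg (X Y : Fin n → Fin n → A) (c : Aˣ) : Prop where
  commute_X_X : ∀ i j k l, Commute (X i j) (X k l)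
  commute_Y_Y : ∀ i j k l, Commute (Y i j) (Y k l)
  lie_X_Y : ∀ i j k l, ⁅X i j, Y k l⁆ = if i = k ∧ j = l then (c : A) else 0
  commute_c_X : ∀ i j, Commute (c : A) (X i j)
  commute_c_Y : ∀ i j, Commute (c : A) (Y i j)

namespace IsHeisenberg

variable {c : Aˣ}

theorem commute_inv (h : IsHeisenberg X Y c) (k l : Fin n) :
    Commute (↑c⁻¹ : A) (X k l) ∧ Commute (↑c⁻¹ : A) (Y k l) :=
  ⟨(h.commute_c_X k l).units_inv_left, (h.commute_c_Y k l).units_inv_left⟩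

theorem lie_quadL_X (h : IsHeisenberg X Y c) (k l : Fin n) :
    ⁅quadL X Y i j, X k l⁆ = c * -(if i = k then X j l else 0) := by
  simp [quadL, sum_lie, Ring.mul_lie_s4, (h.commute_X_X _ _ _ _).lie_eq, ← lie_skew (Y _ _),
    h.lie_X_Y, ite_and, eq_comm (a := k), (h.commute_c_X j l).eq]

theorem lie_quadL_Y (h : IsHeisenberg X Y c) (k l : Fin n) :
    ⁅quadL X Y i j, Y k l⁆ = c * (if j = k then Y i l else 0) := by
  simp [quadL, sum_lie, Ring.mul_lie_s4, (h.commute_Y_Y _ _ _ _).lie_eq, h.lie_X_Y, ite_and]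

theorem lie_quadR_X (h : IsHeisenberg X Y c) (k l : Fin n) :
    ⁅quadR X Y i j, X k l⁆ = c * -(if j = l then X k i else 0) := by
  simp [quadR, sum_lie, Ring.mul_lie_s4, (h.commute_X_X _ _ _ _).lie_eq, ← lie_skew (Y _ _),
    h.lie_X_Y, ite_and, eq_comm (a := l), (h.commute_c_X k i).eq]

theorem lie_quadR_Y (h : IsHeisenberg X Y c) (k l : Fin n) :
    ⁅quadR X Y i j, Y k l⁆ = c * (if i = l then Y k j else 0) := by
  simp [quadR, sum_lie, Ring.mul_lie_s4, (h.commute_Y_Y _ _ _ _).lie_eq, h.lie_X_Y, ite_and]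

theorem isLeftGl (h : IsHeisenberg X Y c) (i j : Fin n) :
    IsLeftGl X Y i j (↑c⁻¹ * quadL X Y i j) := fun k l =>
  ⟨c.lie_inv_mul (h.commute_inv k l).1 (h.lie_quadL_X k l),
    c.lie_inv_mul (h.commute_inv k l).2 (h.lie_quadL_Y k l)⟩

theorem isRightGl (h : IsHeisenberg X Y c) (i j : Fin n) :
    IsRightGl X Y i j (-↑c⁻¹ * quadR X Y i j) := fun k l => by
  rw [neg_mul, neg_lie, neg_lie, c.lie_inv_mul (h.commute_inv k l).1 (h.lie_quadR_X k l),
    c.lie_inv_mul (h.commute_inv k l).2 (h.lie_quadR_Y k l), neg_neg]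
  exact ⟨rfl, rfl⟩

theorem commute_hatL (h : IsHeisenberg X Y c) {e : Fin n → Fin n → A}
    (hL : ∀ i j, IsLeftGl X Y i j (e i j)) (hc : ∀ i j, Commute (e i j) ↑c⁻¹) (i j k l : Fin n) :
    Commute (hatL e X Y ↑c⁻¹ i j) (↑c⁻¹ * quadL X Y k l) ∧
      Commute (hatL e X Y ↑c⁻¹ i j) (-↑c⁻¹ * quadR X Y k l) :=
  commute_mul_quad ((hc i j).sub_left (commute_mul_quad (.refl _) h.commute_inv i j).1.symm)
    ((hL i j).commute_sub (h.isLeftGl i j)) k l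

theorem commute_hatR (h : IsHeisenberg X Y c) {e : Fin n → Fin n → A}
    (hR : ∀ i j, IsRightGl X Y i j (e i j)) (hc : ∀ i j, Commute (e i j) ↑c⁻¹) (i j k l : Fin n) :
    Commute (hatR e X Y ↑c⁻¹ i j) (↑c⁻¹ * quadL X Y k l) ∧
      Commute (hatR e X Y ↑c⁻¹ i j) (-↑c⁻¹ * quadR X Y k l) := by
  rw [hatR_eq_sub]
  exact commute_mul_quad ((hc i j).sub_left (commute_mul_quad (.refl _) h.commute_inv i j).2.symm)
    ((hR i j).commute_sub (h.isRightGl i j)) k l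

theorem isGlBracket_hatL (h : IsHeisenberg X Y c) {e : Fin n → Fin n → A} (he : IsGlBracket e e)
    (hL : ∀ i j, IsLeftGl X Y i j (e i j)) (hc : ∀ i j, Commute (e i j) ↑c⁻¹) :
    IsGlBracket (hatL e X Y ↑c⁻¹) (hatL e X Y ↑c⁻¹) :=
  he.sub (IsGlBracket.mul_left (fun i j => (hL i j).lie_quadL) hc) fun i j k l =>
    (h.commute_hatL hL hc i j k l).1

theorem isGlBracket_hatR (h : IsHeisenberg X Y c) {e : Fin n → Fin n → A} (he : IsGlBracket e e)
    (hR : ∀ i j, IsRightGl X Y i j (e i j)) (hc : ∀ i j, Commute (e i j) ↑c⁻¹) :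
    IsGlBracket (hatR e X Y ↑c⁻¹) (hatR e X Y ↑c⁻¹) := by
  have hcomm := h.commute_hatR hR hc
  rw [hatR_eq_sub] at hcomm ⊢
  exact he.sub (IsGlBracket.mul_left (fun i j => (hR i j).lie_quadR) fun i j => (hc i j).neg_right)
    fun i j k l => (hcomm i j k l).2

theorem commute_hatL_hatR (h : IsHeisenberg X Y c) {eL eR : Fin n → Fin n → A}
    (hL : ∀ i j, IsLeftGl X Y i j (eL i j)) (hR : ∀ i j, IsRightGl X Y i j (eR i j))
    (hLc : ∀ i j, Commute (eL i j) ↑c⁻¹) (hRc : ∀ i j, Commute (eR i j) ↑c⁻¹)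
    (hLR : ∀ i j k l, Commute (eL i j) (eR k l)) (i j k l : Fin n) :
    Commute (hatL eL X Y ↑c⁻¹ i j) (hatR eR X Y ↑c⁻¹ k l) := by
  have hLquadR : Commute (eL i j) (-↑c⁻¹ * quadR X Y k l) :=
    (hLc i j).neg_right.mul_right (commute_iff_lie_eq.mpr ((hL i j).lie_quadR k l))
  have hRquadL := (h.commute_hatR hR hRc k l i j).1
  rw [hatR_eq_sub] at hRquadL ⊢
  exact ((hLR i j k l).sub_right hLquadR).sub_left hRquadL.symm

end IsHeisenberg

end

theorem stmt_4_general {A : Type*} [Ring A] (n : ℕ)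
    (eL eR X Y : Fin n → Fin n → A) (C Cinv : A)
    (hC : C * Cinv = 1) (hC' : Cinv * C = 1)
    (hXX : ∀ i j k l, X i j * X k l - X k l * X i j = 0)
    (hYY : ∀ i j k l, Y i j * Y k l - Y k l * Y i j = 0)
    (hXY : ∀ i j k l, X i j * Y k l - Y k l * X i j = if i = k ∧ j = l then C else 0)
    (hCX : ∀ i j, C * X i j - X i j * C = 0)
    (hCY : ∀ i j, C * Y i j - Y i j * C = 0)
    (hCeL : ∀ i j, C * eL i j - eL i j * C = 0)
    (hCeR : ∀ i j, C * eR i j - eR i j * C = 0)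
    (heLeL : ∀ i j k l, eL i j * eL k l - eL k l * eL i j
      = (if j = k then eL i l else 0) - (if i = l then eL k j else 0))
    (heReR : ∀ i j k l, eR i j * eR k l - eR k l * eR i j
      = (if j = k then eR i l else 0) - (if i = l then eR k j else 0))
    (heLeR : ∀ i j k l, eL i j * eR k l - eR k l * eL i j = 0)
    (heLX : ∀ i j k l, eL i j * X k l - X k l * eL i j = -(if i = k then X j l else 0))
    (heLY : ∀ i j k l, eL i j * Y k l - Y k l * eL i j = (if j = k then Y i l else 0))
    (heRX : ∀ i j k l, eR i j * X k l - X k l * eR i j = (if j = l then X k i else 0))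
    (heRY : ∀ i j k l, eR i j * Y k l - Y k l * eR i j = -(if i = l then Y k j else 0)) :
    ∀ i j k l,
      (hatL eL X Y Cinv i j * hatL eL X Y Cinv k l
          - hatL eL X Y Cinv k l * hatL eL X Y Cinv i j
        = (if j = k then hatL eL X Y Cinv i l else 0)
          - (if i = l then hatL eL X Y Cinv k j else 0)) ∧
      (hatR eR X Y Cinv i j * hatR eR X Y Cinv k l
          - hatR eR X Y Cinv k l * hatR eR X Y Cinv i j
        = (if j = k then hatR eR X Y Cinv i l else 0)
          - (if i = l then hatR eR X Y Cinv k j else 0)) ∧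
      (hatL eL X Y Cinv i j * hatR eR X Y Cinv k l
          - hatR eR X Y Cinv k l * hatL eL X Y Cinv i j = 0) := by
  obtain ⟨c, rfl, rfl⟩ : ∃ c : Aˣ, (c : A) = C ∧ ((c⁻¹ : Aˣ) : A) = Cinv :=
    ⟨⟨C, Cinv, hC, hC'⟩, rfl, rfl⟩
  have hH : IsHeisenberg X Y c :=
    ⟨fun i j k l => sub_eq_zero.mp (hXX i j k l), fun i j k l => sub_eq_zero.mp (hYY i j k l),
      fun i j k l => (Ring.lie_def _ _).trans (hXY i j k l), fun i j => sub_eq_zero.mp (hCX i j),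
      fun i j => sub_eq_zero.mp (hCY i j)⟩
  have hL (i j : Fin n) : IsLeftGl X Y i j (eL i j) := fun k l =>
    ⟨(Ring.lie_def _ _).trans (heLX i j k l), (Ring.lie_def _ _).trans (heLY i j k l)⟩
  have hR (i j : Fin n) : IsRightGl X Y i j (eR i j) := fun k l =>
    ⟨(Ring.lie_def _ _).trans (heRX i j k l), (Ring.lie_def _ _).trans (heRY i j k l)⟩
  have hLc (i j : Fin n) : Commute (eL i j) ↑c⁻¹ :=
    (Commute.units_inv_left (sub_eq_zero.mp (hCeL i j))).symm
  have hRc (i j : Fin n) : Commute (eR i j) ↑c⁻¹ :=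
    (Commute.units_inv_left (sub_eq_zero.mp (hCeR i j))).symm
  have hLL : IsGlBracket eL eL := fun i j k l => (Ring.lie_def _ _).trans (heLeL i j k l)
  have hRR : IsGlBracket eR eR := fun i j k l => (Ring.lie_def _ _).trans (heReR i j k l)
  intro i j k l
  exact ⟨(Ring.lie_def _ _).symm.trans (hH.isGlBracket_hatL hLL hL hLc i j k l),
    (Ring.lie_def _ _).symm.trans (hH.isGlBracket_hatR hRR hR hRc i j k l),
    sub_eq_zero.mpr (hH.commute_hatL_hatR hL hR hLc hRc
      (fun i j k l => sub_eq_zero.mp (heLeR i j k l)) i j k l)⟩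

/-- The shifted generators `ê^L`, `ê^R` satisfy the same `𝔤𝔩_n ⊕ 𝔤𝔩_n` commutation
relations as `e^L`, `e^R`, and the two shifted families commute with each other. -/
theorem stmt_4 {A : Type*} [Ring A] [Algebra ℂ A] (n : ℕ) (hn : 1 ≤ n)
    (eL eR X Y : Fin n → Fin n → A) (C Cinv : A)
    (hC : C * Cinv = 1) (hC' : Cinv * C = 1)
    (hXX : ∀ i j k l, X i j * X k l - X k l * X i j = 0)
    (hYY : ∀ i j k l, Y i j * Y k l - Y k l * Y i j = 0)
    (hXY : ∀ i j k l, X i j * Y k l - Y k l * X i j = if i = k ∧ j = l then C else 0)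
    (hCX : ∀ i j, C * X i j - X i j * C = 0)
    (hCY : ∀ i j, C * Y i j - Y i j * C = 0)
    (hCeL : ∀ i j, C * eL i j - eL i j * C = 0)
    (hCeR : ∀ i j, C * eR i j - eR i j * C = 0)
    (heLeL : ∀ i j k l, eL i j * eL k l - eL k l * eL i j
      = (if j = k then eL i l else 0) - (if i = l then eL k j else 0))
    (heReR : ∀ i j k l, eR i j * eR k l - eR k l * eR i j
      = (if j = k then eR i l else 0) - (if i = l then eR k j else 0))
    (heLeR : ∀ i j k l, eL i j * eR k l - eR k l * eL i j = 0)
    (heLX : ∀ i j k l, eL i j * X k l - X k l * eL i j = -(if i = k then X j l else 0))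
    (heLY : ∀ i j k l, eL i j * Y k l - Y k l * eL i j = (if j = k then Y i l else 0))
    (heRX : ∀ i j k l, eR i j * X k l - X k l * eR i j = (if j = l then X k i else 0))
    (heRY : ∀ i j k l, eR i j * Y k l - Y k l * eR i j = -(if i = l then Y k j else 0)) :
    ∀ i j k l,
      (hatL eL X Y Cinv i j * hatL eL X Y Cinv k l
          - hatL eL X Y Cinv k l * hatL eL X Y Cinv i j
        = (if j = k then hatL eL X Y Cinv i l else 0)
          - (if i = l then hatL eL X Y Cinv k j else 0)) ∧
      (hatR eR X Y Cinv i j * hatR eR X Y Cinv k l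
          - hatR eR X Y Cinv k l * hatR eR X Y Cinv i j
        = (if j = k then hatR eR X Y Cinv i l else 0)
          - (if i = l then hatR eR X Y Cinv k j else 0)) ∧
      (hatL eL X Y Cinv i j * hatR eR X Y Cinv k l
          - hatR eR X Y Cinv k l * hatL eL X Y Cinv i j = 0) :=
  stmt_4_general n eL eR X Y C Cinv hC hC' hXX hYY hXY hCX hCY hCeL hCeR heLeL heReR heLeR heLX heLY
    heRX heRY
end

section
/- Let A be an associative ℂ-algebra with unit, n ≥ 1, and write [a,b] = ab - ba. Suppose given elements b^R_{ij}, X_{ij}, Y_{ij} ∈ A (1 ≤ i,j ≤ n) with b^R_{ij} = b^R_{ji}, and an invertible element C ∈ A, such that: [X_{ij},X_{kl}] = 0, [Y_{ij},Y_{kl}] = 0, [X_{ij},Y_{kl}] = δ_{ik}δ_{jl}C, C commutes with all listed elements, [b^R_{ij}, X_{kl}] = 0, and [b^R_{ij}, Y_{kl}] = -δ_{il}X_{kj} - δ_{jl}X_{ki}. Then the elements b̂^R_{ij} := b^R_{ij} + C^{-1}·Σ_{m=1}^{n} X_{mi}X_{mj} satisfy [b̂^R_{ij}, X_{kl}] =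 0 and [b̂^R_{ij}, Y_{kl}] = 0 for all i,j,k,l. -/
/-!
Since `C` is central and `[X_{mi}, Y_{kl}] = δ_{mk}δ_{il} C`, the commutator with `Y_{kl}` acts as
a derivation on `Σ_m X_{mi} X_{mj}` and only the term `m = k` survives, giving
`C (δ_{jl} X_{ki} + δ_{il} X_{kj})`. After multiplying by `C⁻¹` this cancels `[b^R_{ij}, Y_{kl}]`;
commutation with `X_{kl}` is immediate because all the `X`'s commute.
-/

open Finset

section Commutator

variable {R : Type*} [Ring R]

theorem mul_mul_sub_mul_mul (a b c : R) :
    a * b * c - c * (a * b) = a * (b * c - c * b) + (a * c - c * a) * b := by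
  noncomm_ring

theorem sum_mul_sub_mul_sum {ι : Type*} (s : Finset ι) (f : ι → R) (c : R) :
    (∑ m ∈ s, f m) * c - c * ∑ m ∈ s, f m = ∑ m ∈ s, (f m * c - c * f m) := by
  rw [sum_mul, mul_sum, sum_sub_distrib]

variable {ι κ : Type*} [Fintype ι] [DecidableEq ι] [DecidableEq κ]

theorem sum_mul_mul_sub_mul_sum_mul_of_heisenberg (X Y : ι → κ → R) (C : R)
    (hXY : ∀ i j k l, X i j * Y k l - Y k l * X i j = if i = k ∧ j = l then C else 0)
    (i j : κ) (k : ι) (l : κ) :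
    (∑ m, X m i * X m j) * Y k l - Y k l * ∑ m, X m i * X m j
      = (if j = l then X k i * C else 0) + (if i = l then C * X k j else 0) := by
  simp only [sum_mul_sub_mul_sum, mul_mul_sub_mul_mul, hXY, mul_ite, ite_mul, mul_zero,
    zero_mul, sum_add_distrib, ite_and, sum_ite_eq', mem_univ, if_true]

theorem units_inv_mul_sum_mul_sub_of_heisenberg (u : Rˣ) (X Y : ι → κ → R)
    (hXY : ∀ i j k l, X i j * Y k l - Y k l * X i j = if i = k ∧ j = l then (u : R) else 0)
    (huX : ∀ i j, Commute (u : R) (X i j)) (huY : ∀ i j, Commute (u : R) (Y i j))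
    (i j : κ) (k : ι) (l : κ) :
    (↑u⁻¹ * ∑ m, X m i * X m j) * Y k l - Y k l * (↑u⁻¹ * ∑ m, X m i * X m j)
      = (if j = l then X k i else 0) + (if i = l then X k j else 0) := by
  rw [mul_mul_sub_mul_mul, sub_eq_zero.mpr (huY k l).units_inv_left.eq, zero_mul, add_zero,
    sum_mul_mul_sub_mul_sum_mul_of_heisenberg X Y _ hXY, ← (huX k i).eq]
  simp only [mul_add, mul_ite, mul_zero, Units.inv_mul_cancel_left]

end Commutator

theorem stmt_8_general {A : Type*} [Ring A] (n : ℕ)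
    (b X Y : Fin n → Fin n → A) (C Cinv : A)
    (hC : C * Cinv = 1) (hC' : Cinv * C = 1)
    (hXX : ∀ i j k l, X i j * X k l - X k l * X i j = 0)
    (hXY : ∀ i j k l, X i j * Y k l - Y k l * X i j = if i = k ∧ j = l then C else 0)
    (hCX : ∀ i j, C * X i j - X i j * C = 0)
    (hCY : ∀ i j, C * Y i j - Y i j * C = 0)
    (hbX : ∀ i j k l, b i j * X k l - X k l * b i j = 0)
    (hbY : ∀ i j k l, b i j * Y k l - Y k l * b i j
      = -(if i = l then X k j else 0) - (if j = l then X k i else 0)) :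
    ∀ i j k l,
      ((b i j + Cinv * ∑ m, X m i * X m j) * X k l
          - X k l * (b i j + Cinv * ∑ m, X m i * X m j) = 0) ∧
      ((b i j + Cinv * ∑ m, X m i * X m j) * Y k l
          - Y k l * (b i j + Cinv * ∑ m, X m i * X m j) = 0) := by
  obtain ⟨u, rfl, rfl⟩ : ∃ u : Aˣ, (u : A) = C ∧ ↑u⁻¹ = Cinv := ⟨⟨C, Cinv, hC, hC'⟩, rfl, rfl⟩
  have huX i j : Commute (u : A) (X i j) := sub_eq_zero.mp (hCX i j)
  have huY i j : Commute (u : A) (Y i j) := sub_eq_zero.mp (hCY i j)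
  have hXX' i j k l : Commute (X i j) (X k l) := sub_eq_zero.mp (hXX i j k l)
  have hbX' i j k l : Commute (b i j) (X k l) := sub_eq_zero.mp (hbX i j k l)
  intro i j k l
  constructor
  · refine sub_eq_zero.mpr (Commute.eq ?_)
    refine (hbX' i j k l).add_left ((huX k l).units_inv_left.mul_left ?_)
    exact Commute.sum_left _ _ _ fun m _ => (hXX' m i k l).mul_left (hXX' m j k l)
  · rw [add_mul, mul_add, add_sub_add_comm, hbY,
      units_inv_mul_sum_mul_sub_of_heisenberg u X Y hXY huX huY]
    abel

/-- In an associative ℂ-algebra with Heisenberg generators `X_{ij}, Y_{ij}, C`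
(`C` invertible, central) and symmetric generators `b^R_{ij}` with `[b^R_{ij}, X_{kl}] = 0`,
`[b^R_{ij}, Y_{kl}] = -δ_{il}X_{kj} - δ_{jl}X_{ki}`, the shifted generators
`b̂^R_{ij} = b^R_{ij} + C⁻¹ Σ_m X_{mi} X_{mj}` commute with all `X_{kl}`, `Y_{kl}`. -/
theorem stmt_8 {A : Type*} [Ring A] [Algebra ℂ A] (n : ℕ) (hn : 1 ≤ n)
    (b X Y : Fin n → Fin n → A) (C Cinv : A)
    (hbsym : ∀ i j, b i j = b j i)
    (hC : C * Cinv = 1) (hC' : Cinv * C = 1)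
    (hXX : ∀ i j k l, X i j * X k l - X k l * X i j = 0)
    (hYY : ∀ i j k l, Y i j * Y k l - Y k l * Y i j = 0)
    (hXY : ∀ i j k l, X i j * Y k l - Y k l * X i j = if i = k ∧ j = l then C else 0)
    (hCX : ∀ i j, C * X i j - X i j * C = 0)
    (hCY : ∀ i j, C * Y i j - Y i j * C = 0)
    (hCb : ∀ i j, C * b i j - b i j * C = 0)
    (hbX : ∀ i j k l, b i j * X k l - X k l * b i j = 0)
    (hbY : ∀ i j k l, b i j * Y k l - Y k l * b i j
      = -(if i = l then X k j else 0) - (if j = l then X k i else 0)) :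
    ∀ i j k l,
      ((b i j + Cinv * ∑ m, X m i * X m j) * X k l
          - X k l * (b i j + Cinv * ∑ m, X m i * X m j) = 0) ∧
      ((b i j + Cinv * ∑ m, X m i * X m j) * Y k l
          - Y k l * (b i j + Cinv * ∑ m, X m i * X m j) = 0) :=
  stmt_8_general n b X Y C Cinv hC hC' hXX hXY hCX hCY hbX hbY
end

section
/- Let L be a Lie algebra over ℂ and n ≥ 1. Suppose elements a^{L}_{ij}, a^{R}_{ij}, b^{L}_{ij}, b^{R}_{ij}, c^{L}_{ij}, c^{R}_{ij}, X_{ij}, Y_{ij}, C ∈ L (1 ≤ i,j ≤ n, with b^{L,R}_{ij} = b^{L,R}_{ji} and c^{L,R}_{ij} = c^{L,R}_{ji}) satisfy: the two symplectic families of relations [b^{L,R}_{ij},b^{L,R}_{kl}] = [c^{L,R}_{ij},c^{L,R}_{kl}] = 0, [a^{L,R}_{ij},a^{L,R}_{kl}] = δ_{jk}a^{L,R}_{il} - δ_{il}a^{L,R}_{kj}, [b^{L,R}_{ij},c^{L,R}_{kl}] = δ_{ik}a^{L,R}_{jl} + δ_{jl}a^{L,R}_{ik} + δ_{jk}a^{L,R}_{il}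 + δ_{il}a^{L,R}_{jk}, [a^{L,R}_{ij},b^{L,R}_{kl}] = δ_{jk}b^{L,R}_{il} + δ_{jl}b^{L,R}_{ik}, [a^{L,R}_{ij},c^{L,R}_{kl}] = -δ_{ik}c^{L,R}_{jl} - δ_{il}c^{L,R}_{jk}, with all left generators commuting with all right generators; the Heisenberg relations [X_{ij},X_{kl}] = [Y_{ij},Y_{kl}] = 0, [X_{ij},Y_{kl}] = δ_{ik}δ_{jl}C with C central; the mixed relations [a^L_{ij},X_{kl}] = -δ_{ik}X_{jl}, [a^L_{ij},Y_{kl}] = δ_{jk}Y_{il}, [a^R_{ij},X_{kl}] = δ_{jl}X_{ki}, [a^R_{ij},Y_{kl}] = -δ_{il}Y_{kj}, [b^L_{ij},Y_{kl}] = 0, [b^L_{ij},X_{kl}] = δ_{jk}Y_{il} + δ_{ik}Y_{jl}, [c^L_{ij},X_{kl}] = 0, [c^L_{ij},Y_{kl}] = δ_{jk}X_{il} + δ_{ik}X_{jl}, [b^R_{ij},X_{kl}] = 0, [b^R_{ij},Y_{kl}] = -δ_{il}X_{kj} - δ_{jl}X_{ki}, [c^R_{ij},Y_{kl}] = 0,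 [c^R_{ij},X_{kl}] = -δ_{il}Y_{kj} - δ_{jl}Y_{ki}. Let 𝔨 be the ℂ-linear span of the elements a^{L}_{ij} - a^{L}_{ji}, a^{R}_{ij} - a^{R}_{ji}, b^{L}_{ij} - c^{L}_{ij}, b^{R}_{ij} - c^{R}_{ij}, and X_{ij} - i·Y_{ij} (i = √(-1)), and let 𝒜 ⊆ 𝔨 be the span of the elements X_{ij} - i·Y_{ij}. Then 𝔨 is closed under the Lie bracket (i.e. is a Lie subalgebra of L), and 𝒜 is an abelian Lie ideal of 𝔨. -/
/-!
Every bracket of two spanning elements of `𝔨` can be computed from the relations and is again a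
combination of spanning elements. The elements `a i j - a j i` and `b i j - c i j` of each copy of
`𝔰𝔭_{2n}` close up among themselves, the two copies commute, and both act on the elements
`Z i j = X i j - i • Y i j` by combinations of `Z`'s: `b` sends `X`'s to `Y`'s and `c` sends
`Y`'s to `X`'s with the same index pattern, so `b - c` acts on `X - i • Y` as `i` times an index
action. Two `Z`'s commute because the central terms `-i ⁅X, Y⁆` and `-i ⁅Y, X⁆` cancel.
Bilinearity of the bracket passes all of this to the spans.
-/

section Span

variable {R L M : Type*} [CommRing R] [LieRing L] [LieAlgebra R L] [AddCommGroup M] [Module R M]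
  [LieRingModule L M] [LieModule R L M]

theorem lie_mem_of_mem_span {s : Set L} {t : Set M} {N : Submodule R M}
    (h : ∀ u ∈ s, ∀ v ∈ t, ⁅u, v⁆ ∈ N) {u : L} {v : M} (hu : u ∈ Submodule.span R s)
    (hv : v ∈ Submodule.span R t) : ⁅u, v⁆ ∈ N := by
  induction hu, hv using Submodule.span_induction₂ with
  | mem_mem x y hx hy => exact h x hx y hy
  | zero_left => simp
  | zero_right => simp
  | add_left _ _ _ _ _ _ hx hy => rw [add_lie]; exact add_mem hx hy
  | add_right _ _ _ _ _ _ hx hy => rw [lie_add]; exact add_mem hx hy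
  | smul_left r _ _ _ _ h => rw [smul_lie]; exact N.smul_mem r h
  | smul_right r _ _ _ _ h => rw [lie_smul]; exact N.smul_mem r h

theorem lie_eq_zero_of_mem_span {s : Set L} {t : Set M} (h : ∀ u ∈ s, ∀ v ∈ t, ⁅u, v⁆ = 0)
    {u : L} {v : M} (hu : u ∈ Submodule.span R s) (hv : v ∈ Submodule.span R t) : ⁅u, v⁆ = 0 :=
  (Submodule.mem_bot R).1 <|
    lie_mem_of_mem_span (fun u hu v hv ↦ (Submodule.mem_bot R).2 (h u hu v hv)) hu hv

theorem lie_mem_span_union {s t : Set L} (hs : ∀ u ∈ s, ∀ v ∈ s, ⁅u, v⁆ ∈ Submodule.span R s)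
    (hst : ∀ u ∈ s, ∀ v ∈ t, ⁅u, v⁆ ∈ Submodule.span R t)
    (ht : ∀ u ∈ t, ∀ v ∈ t, ⁅u, v⁆ ∈ Submodule.span R t) :
    ∀ u ∈ s ∪ t, ∀ v ∈ s ∪ t, ⁅u, v⁆ ∈ Submodule.span R (s ∪ t) := by
  have hs' : Submodule.span R s ≤ Submodule.span R (s ∪ t) :=
    Submodule.span_mono Set.subset_union_left
  have ht' : Submodule.span R t ≤ Submodule.span R (s ∪ t) :=
    Submodule.span_mono Set.subset_union_right
  rintro u (hu | hu) v (hv | hv)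
  · exact hs' (hs u hu v hv)
  · exact ht' (hst u hu v hv)
  · rw [← lie_skew]
    exact neg_mem (ht' (hst v hv u hu))
  · exact ht' (ht u hu v hv)

end Span

theorem ite_zero_mem {R E : Type*} [Semiring R] [AddCommMonoid E] [Module R E]
    {N : Submodule R E} (P : Prop) [Decidable P] {x : E} (hx : x ∈ N) :
    (if P then x else 0) ∈ N := by
  split_ifs
  exacts [hx, zero_mem N]

section Symplectic

variable {R L ι : Type*} [CommRing R] [LieRing L] [LieAlgebra R L]

/-- For the generators `a, b, c` of `𝔰𝔭_{2n}` these elements span its compact form `𝔲_n`. -/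
def unitaryGenerators (a b c : ι → ι → L) : Set L :=
  (Set.range fun p : ι × ι => a p.1 p.2 - a p.2 p.1) ∪
    Set.range fun p : ι × ι => b p.1 p.2 - c p.1 p.2

theorem unitaryGenerators_union_unitaryGenerators (a b c a' b' c' : ι → ι → L) :
    unitaryGenerators a b c ∪ unitaryGenerators a' b' c'
      = (Set.range fun p : ι × ι => a p.1 p.2 - a p.2 p.1)
        ∪ (Set.range fun p : ι × ι => a' p.1 p.2 - a' p.2 p.1)
        ∪ (Set.range fun p : ι × ι => b p.1 p.2 - c p.1 p.2)
        ∪ (Set.range fun p : ι × ι => b' p.1 p.2 - c' p.1 p.2) := by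
  rw [unitaryGenerators, unitaryGenerators, Set.union_union_union_comm, ← Set.union_assoc]

theorem lie_eq_zero_of_mem_unitaryGenerators {a b c a' b' c' : ι → ι → L}
    (haa : ∀ i j k l, ⁅a i j, a' k l⁆ = 0) (hab : ∀ i j k l, ⁅a i j, b' k l⁆ = 0)
    (hac : ∀ i j k l, ⁅a i j, c' k l⁆ = 0) (hba : ∀ i j k l, ⁅b i j, a' k l⁆ = 0)
    (hbb : ∀ i j k l, ⁅b i j, b' k l⁆ = 0) (hbc : ∀ i j k l, ⁅b i j, c' k l⁆ = 0)
    (hca : ∀ i j k l, ⁅c i j, a' k l⁆ = 0) (hcb : ∀ i j k l, ⁅c i j, b' k l⁆ = 0)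
    (hcc : ∀ i j k l, ⁅c i j, c' k l⁆ = 0) :
    ∀ u ∈ unitaryGenerators a b c, ∀ v ∈ unitaryGenerators a' b' c', ⁅u, v⁆ = 0 := by
  rintro _ (⟨⟨i, j⟩, rfl⟩ | ⟨⟨i, j⟩, rfl⟩) _ (⟨⟨k, l⟩, rfl⟩ | ⟨⟨k, l⟩, rfl⟩) <;>
    simp [*]

variable [DecidableEq ι]

theorem lie_sub_swap_sub_swap {a : ι → ι → L}
    (ha : ∀ i j k l, ⁅a i j, a k l⁆ = (if j = k then a i l else 0) - (if i = l then a k j else 0))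
    (i j k l : ι) :
    ⁅a i j - a j i, a k l - a l k⁆
      = (if j = k then a i l - a l i else 0) + (if i = l then a j k - a k j else 0)
        - (if j = l then a i k - a k i else 0) - (if i = k then a j l - a l j else 0) := by
  simp only [lie_sub, sub_lie, ha]
  split_ifs <;> abel

theorem lie_sub_swap_sub {a b c : ι → ι → L}
    (hab : ∀ i j k l, ⁅a i j, b k l⁆ = (if j = k then b i l else 0) + (if j = l then b i k else 0))
    (hac : ∀ i j k l, ⁅a i j, c k l⁆
      = -(if i = k then c j l else 0) - (if i = l then c j k else 0))
    (i j k l : ι) :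
    ⁅a i j - a j i, b k l - c k l⁆
      = (if j = k then b i l - c i l else 0) + (if j = l then b i k - c i k else 0)
        - (if i = k then b j l - c j l else 0) - (if i = l then b j k - c j k else 0) := by
  simp only [lie_sub, sub_lie, hab, hac]
  split_ifs <;> abel

theorem lie_sub_sub {a b c : ι → ι → L} (hbb : ∀ i j k l, ⁅b i j, b k l⁆ = 0)
    (hcc : ∀ i j k l, ⁅c i j, c k l⁆ = 0)
    (hbc : ∀ i j k l, ⁅b i j, c k l⁆
      = (if i = k then a j l else 0) + (if j = l then a i k else 0)
        + (if j = k then a i l else 0) + (if i = l then a j k else 0))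
    (i j k l : ι) :
    ⁅b i j - c i j, b k l - c k l⁆
      = (if i = k then a l j - a j l else 0) + (if j = l then a k i - a i k else 0)
        + (if j = k then a l i - a i l else 0) + (if i = l then a k j - a j k else 0) := by
  rw [lie_sub, sub_lie, sub_lie, hbb, hcc, ← lie_skew (c i j), hbc, hbc]
  simp only [eq_comm (a := k), eq_comm (a := l)]
  split_ifs <;> abel

structure SymplecticRelations (a b c : ι → ι → L) : Prop where
  lie_b_b : ∀ i j k l, ⁅b i j, b k l⁆ = 0
  lie_c_c : ∀ i j k l, ⁅c i j, c k l⁆ = 0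
  lie_a_a : ∀ i j k l, ⁅a i j, a k l⁆
    = (if j = k then a i l else 0) - (if i = l then a k j else 0)
  lie_b_c : ∀ i j k l, ⁅b i j, c k l⁆
    = (if i = k then a j l else 0) + (if j = l then a i k else 0)
      + (if j = k then a i l else 0) + (if i = l then a j k else 0)
  lie_a_b : ∀ i j k l, ⁅a i j, b k l⁆
    = (if j = k then b i l else 0) + (if j = l then b i k else 0)
  lie_a_c : ∀ i j k l, ⁅a i j, c k l⁆
    = -(if i = k then c j l else 0) - (if i = l then c j k else 0)

theorem SymplecticRelations.lie_mem_span_unitaryGenerators {a b c : ι → ι → L}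
    (h : SymplecticRelations a b c) :
    ∀ u ∈ unitaryGenerators a b c, ∀ v ∈ unitaryGenerators a b c,
      ⁅u, v⁆ ∈ Submodule.span R (unitaryGenerators a b c) := by
  have ha (i j : ι) : a i j - a j i ∈ Submodule.span R (unitaryGenerators a b c) :=
    Submodule.subset_span (Or.inl ⟨(i, j), rfl⟩)
  have hbc (i j : ι) : b i j - c i j ∈ Submodule.span R (unitaryGenerators a b c) :=
    Submodule.subset_span (Or.inr ⟨(i, j), rfl⟩)
  have habc (i j k l : ι) :
      ⁅a i j - a j i, b k l - c k l⁆ ∈ Submodule.span R (unitaryGenerators a b c) := by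
    rw [lie_sub_swap_sub h.lie_a_b h.lie_a_c]
    apply_rules [add_mem, sub_mem, ite_zero_mem]
  rintro _ (⟨⟨i, j⟩, rfl⟩ | ⟨⟨i, j⟩, rfl⟩) _ (⟨⟨k, l⟩, rfl⟩ | ⟨⟨k, l⟩, rfl⟩)
  · rw [lie_sub_swap_sub_swap h.lie_a_a]
    apply_rules [add_mem, sub_mem, ite_zero_mem]
  · exact habc i j k l
  · rw [← lie_skew]
    exact neg_mem (habc k l i j)
  · rw [lie_sub_sub h.lie_b_b h.lie_c_c h.lie_b_c]
    apply_rules [add_mem, sub_mem, ite_zero_mem]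

end Symplectic

section Heisenberg

variable {L ι : Type*} [LieRing L] [LieAlgebra ℂ L] [DecidableEq ι]

open Complex

theorem lie_sub_smul_sub_smul_eq_zero {X Y : ι → ι → L} {C : L}
    (hXX : ∀ i j k l, ⁅X i j, X k l⁆ = 0) (hYY : ∀ i j k l, ⁅Y i j, Y k l⁆ = 0)
    (hXY : ∀ i j k l, ⁅X i j, Y k l⁆ = if i = k ∧ j = l then C else 0) (i j k l : ι) :
    ⁅X i j - I • Y i j, X k l - I • Y k l⁆ = 0 := by
  rw [lie_sub, sub_lie, sub_lie, lie_smul, smul_lie, ← lie_skew (Y i j), hXY, hXY, hXX, lie_smul,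
    smul_lie, hYY]
  simp only [eq_comm (a := k), eq_comm (a := l), smul_neg, smul_zero]
  abel

theorem lie_sub_swap_sub_smul_of_left {a X Y : ι → ι → L}
    (haX : ∀ i j k l, ⁅a i j, X k l⁆ = -(if i = k then X j l else 0))
    (haY : ∀ i j k l, ⁅a i j, Y k l⁆ = (if j = k then Y i l else 0)) (i j k l : ι) :
    ⁅a i j - a j i, X k l - I • Y k l⁆
      = (if j = k then X i l - I • Y i l else 0) - (if i = k then X j l - I • Y j l else 0) := by
  simp only [lie_sub, sub_lie, lie_smul, haX, haY]
  split_ifs <;> simp only [smul_sub, smul_zero] <;> abel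

theorem lie_sub_sub_smul_of_left {b c X Y : ι → ι → L}
    (hbX : ∀ i j k l, ⁅b i j, X k l⁆ = (if j = k then Y i l else 0) + (if i = k then Y j l else 0))
    (hbY : ∀ i j k l, ⁅b i j, Y k l⁆ = 0) (hcX : ∀ i j k l, ⁅c i j, X k l⁆ = 0)
    (hcY : ∀ i j k l, ⁅c i j, Y k l⁆ = (if j = k then X i l else 0) + (if i = k then X j l else 0))
    (i j k l : ι) :
    ⁅b i j - c i j, X k l - I • Y k l⁆
      = I • ((if j = k then X i l - I • Y i l else 0)
        + (if i = k then X j l - I • Y j l else 0)) := by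
  simp only [lie_sub, sub_lie, lie_smul, hbX, hbY, hcX, hcY]
  split_ifs <;> simp only [smul_add, smul_sub, smul_zero, smul_smul, I_mul_I, neg_one_smul] <;>
    abel

theorem lie_sub_swap_sub_smul_of_right {a X Y : ι → ι → L}
    (haX : ∀ i j k l, ⁅a i j, X k l⁆ = (if j = l then X k i else 0))
    (haY : ∀ i j k l, ⁅a i j, Y k l⁆ = -(if i = l then Y k j else 0)) (i j k l : ι) :
    ⁅a i j - a j i, X k l - I • Y k l⁆
      = (if j = l then X k i - I • Y k i else 0) - (if i = l then X k j - I • Y k j else 0) := by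
  simp only [lie_sub, sub_lie, lie_smul, haX, haY]
  split_ifs <;> simp only [smul_sub, smul_zero, smul_neg] <;> abel

theorem lie_sub_sub_smul_of_right {b c X Y : ι → ι → L}
    (hbX : ∀ i j k l, ⁅b i j, X k l⁆ = 0)
    (hbY : ∀ i j k l, ⁅b i j, Y k l⁆
      = -(if i = l then X k j else 0) - (if j = l then X k i else 0))
    (hcX : ∀ i j k l, ⁅c i j, X k l⁆
      = -(if i = l then Y k j else 0) - (if j = l then Y k i else 0))
    (hcY : ∀ i j k l, ⁅c i j, Y k l⁆ = 0) (i j k l : ι) :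
    ⁅b i j - c i j, X k l - I • Y k l⁆
      = I • ((if i = l then X k j - I • Y k j else 0)
        + (if j = l then X k i - I • Y k i else 0)) := by
  simp only [lie_sub, sub_lie, lie_smul, hbX, hbY, hcX, hcY]
  split_ifs <;>
    simp only [smul_add, smul_sub, smul_zero, smul_neg, smul_smul, I_mul_I, neg_one_smul] <;> abel

structure LeftMixedRelations (a b c X Y : ι → ι → L) : Prop where
  lie_a_X : ∀ i j k l, ⁅a i j, X k l⁆ = -(if i = k then X j l else 0)
  lie_a_Y : ∀ i j k l, ⁅a i j, Y k l⁆ = (if j = k then Y i l else 0)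
  lie_b_Y : ∀ i j k l, ⁅b i j, Y k l⁆ = 0
  lie_b_X : ∀ i j k l, ⁅b i j, X k l⁆
    = (if j = k then Y i l else 0) + (if i = k then Y j l else 0)
  lie_c_X : ∀ i j k l, ⁅c i j, X k l⁆ = 0
  lie_c_Y : ∀ i j k l, ⁅c i j, Y k l⁆
    = (if j = k then X i l else 0) + (if i = k then X j l else 0)

structure RightMixedRelations (a b c X Y : ι → ι → L) : Prop where
  lie_a_X : ∀ i j k l, ⁅a i j, X k l⁆ = (if j = l then X k i else 0)
  lie_a_Y : ∀ i j k l, ⁅a i j, Y k l⁆ = -(if i = l then Y k j else 0)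
  lie_b_X : ∀ i j k l, ⁅b i j, X k l⁆ = 0
  lie_b_Y : ∀ i j k l, ⁅b i j, Y k l⁆
    = -(if i = l then X k j else 0) - (if j = l then X k i else 0)
  lie_c_Y : ∀ i j k l, ⁅c i j, Y k l⁆ = 0
  lie_c_X : ∀ i j k l, ⁅c i j, X k l⁆
    = -(if i = l then Y k j else 0) - (if j = l then Y k i else 0)

theorem LeftMixedRelations.lie_mem_span {a b c X Y : ι → ι → L}
    (h : LeftMixedRelations a b c X Y) :
    ∀ u ∈ unitaryGenerators a b c, ∀ v ∈ Set.range fun p : ι × ι => X p.1 p.2 - I • Y p.1 p.2,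
      ⁅u, v⁆ ∈ Submodule.span ℂ (Set.range fun p : ι × ι => X p.1 p.2 - I • Y p.1 p.2) := by
  have hZ (i j : ι) : X i j - I • Y i j
      ∈ Submodule.span ℂ (Set.range fun p : ι × ι => X p.1 p.2 - I • Y p.1 p.2) :=
    Submodule.subset_span ⟨(i, j), rfl⟩
  rintro _ (⟨⟨i, j⟩, rfl⟩ | ⟨⟨i, j⟩, rfl⟩) _ ⟨⟨k, l⟩, rfl⟩
  · rw [lie_sub_swap_sub_smul_of_left h.lie_a_X h.lie_a_Y]
    apply_rules [sub_mem, ite_zero_mem]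
  · rw [lie_sub_sub_smul_of_left h.lie_b_X h.lie_b_Y h.lie_c_X h.lie_c_Y]
    apply_rules [Submodule.smul_mem, add_mem, ite_zero_mem]

theorem RightMixedRelations.lie_mem_span {a b c X Y : ι → ι → L}
    (h : RightMixedRelations a b c X Y) :
    ∀ u ∈ unitaryGenerators a b c, ∀ v ∈ Set.range fun p : ι × ι => X p.1 p.2 - I • Y p.1 p.2,
      ⁅u, v⁆ ∈ Submodule.span ℂ (Set.range fun p : ι × ι => X p.1 p.2 - I • Y p.1 p.2) := by
  have hZ (i j : ι) : X i j - I • Y i j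
      ∈ Submodule.span ℂ (Set.range fun p : ι × ι => X p.1 p.2 - I • Y p.1 p.2) :=
    Submodule.subset_span ⟨(i, j), rfl⟩
  rintro _ (⟨⟨i, j⟩, rfl⟩ | ⟨⟨i, j⟩, rfl⟩) _ ⟨⟨k, l⟩, rfl⟩
  · rw [lie_sub_swap_sub_smul_of_right h.lie_a_X h.lie_a_Y]
    apply_rules [sub_mem, ite_zero_mem]
  · rw [lie_sub_sub_smul_of_right h.lie_b_X h.lie_b_Y h.lie_c_X h.lie_c_Y]
    apply_rules [Submodule.smul_mem, add_mem, ite_zero_mem]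

end Heisenberg

theorem stmt_13_general {L : Type*} [LieRing L] [LieAlgebra ℂ L] (n : ℕ)
    (aL aR bL bR cL cR X Y : Fin n → Fin n → L) (C : L)
    -- symplectic relations, left copy
    (hbLbL : ∀ i j k l, ⁅bL i j, bL k l⁆ = 0)
    (hcLcL : ∀ i j k l, ⁅cL i j, cL k l⁆ = 0)
    (haLaL : ∀ i j k l, ⁅aL i j, aL k l⁆
      = (if j = k then aL i l else 0) - (if i = l then aL k j else 0))
    (hbLcL : ∀ i j k l, ⁅bL i j, cL k l⁆
      = (if i = k then aL j l else 0) + (if j = l then aL i k else 0)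
        + (if j = k then aL i l else 0) + (if i = l then aL j k else 0))
    (haLbL : ∀ i j k l, ⁅aL i j, bL k l⁆
      = (if j = k then bL i l else 0) + (if j = l then bL i k else 0))
    (haLcL : ∀ i j k l, ⁅aL i j, cL k l⁆
      = -(if i = k then cL j l else 0) - (if i = l then cL j k else 0))
    -- symplectic relations, right copy
    (hbRbR : ∀ i j k l, ⁅bR i j, bR k l⁆ = 0)
    (hcRcR : ∀ i j k l, ⁅cR i j, cR k l⁆ = 0)
    (haRaR : ∀ i j k l, ⁅aR i j, aR k l⁆
      = (if j = k then aR i l else 0) - (if i = l then aR k j else 0))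
    (hbRcR : ∀ i j k l, ⁅bR i j, cR k l⁆
      = (if i = k then aR j l else 0) + (if j = l then aR i k else 0)
        + (if j = k then aR i l else 0) + (if i = l then aR j k else 0))
    (haRbR : ∀ i j k l, ⁅aR i j, bR k l⁆
      = (if j = k then bR i l else 0) + (if j = l then bR i k else 0))
    (haRcR : ∀ i j k l, ⁅aR i j, cR k l⁆
      = -(if i = k then cR j l else 0) - (if i = l then cR j k else 0))
    -- left generators commute with right generators
    (haLaR : ∀ i j k l, ⁅aL i j, aR k l⁆ = 0)
    (haLbR : ∀ i j k l, ⁅aL i j, bR k l⁆ = 0)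
    (haLcR : ∀ i j k l, ⁅aL i j, cR k l⁆ = 0)
    (hbLaR : ∀ i j k l, ⁅bL i j, aR k l⁆ = 0)
    (hbLbR : ∀ i j k l, ⁅bL i j, bR k l⁆ = 0)
    (hbLcR : ∀ i j k l, ⁅bL i j, cR k l⁆ = 0)
    (hcLaR : ∀ i j k l, ⁅cL i j, aR k l⁆ = 0)
    (hcLbR : ∀ i j k l, ⁅cL i j, bR k l⁆ = 0)
    (hcLcR : ∀ i j k l, ⁅cL i j, cR k l⁆ = 0)
    -- Heisenberg relations with C central
    (hXX : ∀ i j k l, ⁅X i j, X k l⁆ = 0)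
    (hYY : ∀ i j k l, ⁅Y i j, Y k l⁆ = 0)
    (hXY : ∀ i j k l, ⁅X i j, Y k l⁆ = if i = k ∧ j = l then C else 0)
    -- mixed relations
    (haLX : ∀ i j k l, ⁅aL i j, X k l⁆ = -(if i = k then X j l else 0))
    (haLY : ∀ i j k l, ⁅aL i j, Y k l⁆ = (if j = k then Y i l else 0))
    (haRX : ∀ i j k l, ⁅aR i j, X k l⁆ = (if j = l then X k i else 0))
    (haRY : ∀ i j k l, ⁅aR i j, Y k l⁆ = -(if i = l then Y k j else 0))
    (hbLY : ∀ i j k l, ⁅bL i j, Y k l⁆ = 0)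
    (hbLX : ∀ i j k l, ⁅bL i j, X k l⁆
      = (if j = k then Y i l else 0) + (if i = k then Y j l else 0))
    (hcLX : ∀ i j k l, ⁅cL i j, X k l⁆ = 0)
    (hcLY : ∀ i j k l, ⁅cL i j, Y k l⁆
      = (if j = k then X i l else 0) + (if i = k then X j l else 0))
    (hbRX : ∀ i j k l, ⁅bR i j, X k l⁆ = 0)
    (hbRY : ∀ i j k l, ⁅bR i j, Y k l⁆
      = -(if i = l then X k j else 0) - (if j = l then X k i else 0))
    (hcRY : ∀ i j k l, ⁅cR i j, Y k l⁆ = 0)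
    (hcRX : ∀ i j k l, ⁅cR i j, X k l⁆
      = -(if i = l then Y k j else 0) - (if j = l then Y k i else 0))
    -- the spherical subspace 𝔨 and its subspace 𝒜
    (K A : Submodule ℂ L)
    (hK : K = Submodule.span ℂ
      ((Set.range fun p : Fin n × Fin n => aL p.1 p.2 - aL p.2 p.1)
        ∪ (Set.range fun p : Fin n × Fin n => aR p.1 p.2 - aR p.2 p.1)
        ∪ (Set.range fun p : Fin n × Fin n => bL p.1 p.2 - cL p.1 p.2)
        ∪ (Set.range fun p : Fin n × Fin n => bR p.1 p.2 - cR p.1 p.2)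
        ∪ (Set.range fun p : Fin n × Fin n => X p.1 p.2 - Complex.I • Y p.1 p.2)))
    (hA : A = Submodule.span ℂ
      (Set.range fun p : Fin n × Fin n => X p.1 p.2 - Complex.I • Y p.1 p.2)) :
    (∀ u ∈ K, ∀ v ∈ K, ⁅u, v⁆ ∈ K) ∧
    A ≤ K ∧
    (∀ u ∈ A, ∀ v ∈ A, ⁅u, v⁆ = 0) ∧
    (∀ u ∈ K, ∀ v ∈ A, ⁅u, v⁆ ∈ A) := by
  subst hK hA
  rw [← unitaryGenerators_union_unitaryGenerators]
  set Z := Set.range fun p : Fin n × Fin n => X p.1 p.2 - Complex.I • Y p.1 p.2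
  set U := unitaryGenerators aL bL cL ∪ unitaryGenerators aR bR cR
  have hU : ∀ u ∈ U, ∀ v ∈ U, ⁅u, v⁆ ∈ Submodule.span ℂ U :=
    lie_mem_span_union
      (SymplecticRelations.lie_mem_span_unitaryGenerators
        ⟨hbLbL, hcLcL, haLaL, hbLcL, haLbL, haLcL⟩)
      (fun u hu v hv ↦ lie_eq_zero_of_mem_unitaryGenerators haLaR haLbR haLcR hbLaR hbLbR hbLcR
        hcLaR hcLbR hcLcR u hu v hv ▸ zero_mem _)
      (SymplecticRelations.lie_mem_span_unitaryGenerators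
        ⟨hbRbR, hcRcR, haRaR, hbRcR, haRbR, haRcR⟩)
  have hZZ : ∀ u ∈ Z, ∀ v ∈ Z, ⁅u, v⁆ = 0 := by
    rintro _ ⟨⟨i, j⟩, rfl⟩ _ ⟨⟨k, l⟩, rfl⟩
    exact lie_sub_smul_sub_smul_eq_zero hXX hYY hXY i j k l
  have hUZ : ∀ u ∈ U, ∀ v ∈ Z, ⁅u, v⁆ ∈ Submodule.span ℂ Z := by
    rintro u (hu | hu)
    · exact LeftMixedRelations.lie_mem_span ⟨haLX, haLY, hbLY, hbLX, hcLX, hcLY⟩ u hu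
    · exact RightMixedRelations.lie_mem_span ⟨haRX, haRY, hbRX, hbRY, hcRY, hcRX⟩ u hu
  have hZZ_mem : ∀ u ∈ Z, ∀ v ∈ Z, ⁅u, v⁆ ∈ Submodule.span ℂ Z := fun u hu v hv ↦
    hZZ u hu v hv ▸ zero_mem _
  refine ⟨fun u hu v hv ↦ lie_mem_of_mem_span (lie_mem_span_union hU hUZ hZZ_mem) hu hv,
    Submodule.span_mono Set.subset_union_right,
    fun u hu v hv ↦ lie_eq_zero_of_mem_span hZZ hu hv,
    fun u hu v hv ↦ lie_mem_of_mem_span ?_ hu hv⟩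
  rintro u (hu | hu) v hv
  exacts [hUZ u hu v hv, hZZ_mem u hu v hv]

/-- The spherical subalgebra Lemma for `𝔥𝔰𝔭_{2ℓ+2}`: the span `𝔨` of the elements
`a^{L,R}_{ij} - a^{L,R}_{ji}`, `b^{L,R}_{ij} - c^{L,R}_{ij}` and `X_{ij} - i·Y_{ij}`
is closed under the Lie bracket, and the span `𝒜` of the elements `X_{ij} - i·Y_{ij}`
is an abelian Lie ideal of `𝔨`. -/
theorem stmt_13 {L : Type*} [LieRing L] [LieAlgebra ℂ L] (n : ℕ) (hn : 1 ≤ n)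
    (aL aR bL bR cL cR X Y : Fin n → Fin n → L) (C : L)
    (hbLsym : ∀ i j, bL i j = bL j i) (hbRsym : ∀ i j, bR i j = bR j i)
    (hcLsym : ∀ i j, cL i j = cL j i) (hcRsym : ∀ i j, cR i j = cR j i)
    -- symplectic relations, left copy
    (hbLbL : ∀ i j k l, ⁅bL i j, bL k l⁆ = 0)
    (hcLcL : ∀ i j k l, ⁅cL i j, cL k l⁆ = 0)
    (haLaL : ∀ i j k l, ⁅aL i j, aL k l⁆
      = (if j = k then aL i l else 0) - (if i = l then aL k j else 0))
    (hbLcL : ∀ i j k l, ⁅bL i j, cL k l⁆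
      = (if i = k then aL j l else 0) + (if j = l then aL i k else 0)
        + (if j = k then aL i l else 0) + (if i = l then aL j k else 0))
    (haLbL : ∀ i j k l, ⁅aL i j, bL k l⁆
      = (if j = k then bL i l else 0) + (if j = l then bL i k else 0))
    (haLcL : ∀ i j k l, ⁅aL i j, cL k l⁆
      = -(if i = k then cL j l else 0) - (if i = l then cL j k else 0))
    -- symplectic relations, right copy
    (hbRbR : ∀ i j k l, ⁅bR i j, bR k l⁆ = 0)
    (hcRcR : ∀ i j k l, ⁅cR i j, cR k l⁆ = 0)
    (haRaR : ∀ i j k l, ⁅aR i j, aR k l⁆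
      = (if j = k then aR i l else 0) - (if i = l then aR k j else 0))
    (hbRcR : ∀ i j k l, ⁅bR i j, cR k l⁆
      = (if i = k then aR j l else 0) + (if j = l then aR i k else 0)
        + (if j = k then aR i l else 0) + (if i = l then aR j k else 0))
    (haRbR : ∀ i j k l, ⁅aR i j, bR k l⁆
      = (if j = k then bR i l else 0) + (if j = l then bR i k else 0))
    (haRcR : ∀ i j k l, ⁅aR i j, cR k l⁆
      = -(if i = k then cR j l else 0) - (if i = l then cR j k else 0))
    -- left generators commute with right generators
    (haLaR : ∀ i j k l, ⁅aL i j, aR k l⁆ = 0)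
    (haLbR : ∀ i j k l, ⁅aL i j, bR k l⁆ = 0)
    (haLcR : ∀ i j k l, ⁅aL i j, cR k l⁆ = 0)
    (hbLaR : ∀ i j k l, ⁅bL i j, aR k l⁆ = 0)
    (hbLbR : ∀ i j k l, ⁅bL i j, bR k l⁆ = 0)
    (hbLcR : ∀ i j k l, ⁅bL i j, cR k l⁆ = 0)
    (hcLaR : ∀ i j k l, ⁅cL i j, aR k l⁆ = 0)
    (hcLbR : ∀ i j k l, ⁅cL i j, bR k l⁆ = 0)
    (hcLcR : ∀ i j k l, ⁅cL i j, cR k l⁆ = 0)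
    -- Heisenberg relations with C central
    (hXX : ∀ i j k l, ⁅X i j, X k l⁆ = 0)
    (hYY : ∀ i j k l, ⁅Y i j, Y k l⁆ = 0)
    (hXY : ∀ i j k l, ⁅X i j, Y k l⁆ = if i = k ∧ j = l then C else 0)
    (hCX : ∀ i j, ⁅C, X i j⁆ = 0) (hCY : ∀ i j, ⁅C, Y i j⁆ = 0)
    (hCaL : ∀ i j, ⁅C, aL i j⁆ = 0) (hCaR : ∀ i j, ⁅C, aR i j⁆ = 0)
    (hCbL : ∀ i j, ⁅C, bL i j⁆ = 0) (hCbR : ∀ i j, ⁅C, bR i j⁆ = 0)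
    (hCcL : ∀ i j, ⁅C, cL i j⁆ = 0) (hCcR : ∀ i j, ⁅C, cR i j⁆ = 0)
    -- mixed relations
    (haLX : ∀ i j k l, ⁅aL i j, X k l⁆ = -(if i = k then X j l else 0))
    (haLY : ∀ i j k l, ⁅aL i j, Y k l⁆ = (if j = k then Y i l else 0))
    (haRX : ∀ i j k l, ⁅aR i j, X k l⁆ = (if j = l then X k i else 0))
    (haRY : ∀ i j k l, ⁅aR i j, Y k l⁆ = -(if i = l then Y k j else 0))
    (hbLY : ∀ i j k l, ⁅bL i j, Y k l⁆ = 0)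
    (hbLX : ∀ i j k l, ⁅bL i j, X k l⁆
      = (if j = k then Y i l else 0) + (if i = k then Y j l else 0))
    (hcLX : ∀ i j k l, ⁅cL i j, X k l⁆ = 0)
    (hcLY : ∀ i j k l, ⁅cL i j, Y k l⁆
      = (if j = k then X i l else 0) + (if i = k then X j l else 0))
    (hbRX : ∀ i j k l, ⁅bR i j, X k l⁆ = 0)
    (hbRY : ∀ i j k l, ⁅bR i j, Y k l⁆
      = -(if i = l then X k j else 0) - (if j = l then X k i else 0))
    (hcRY : ∀ i j k l, ⁅cR i j, Y k l⁆ = 0)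
    (hcRX : ∀ i j k l, ⁅cR i j, X k l⁆
      = -(if i = l then Y k j else 0) - (if j = l then Y k i else 0))
    -- the spherical subspace 𝔨 and its subspace 𝒜
    (K A : Submodule ℂ L)
    (hK : K = Submodule.span ℂ
      ((Set.range fun p : Fin n × Fin n => aL p.1 p.2 - aL p.2 p.1)
        ∪ (Set.range fun p : Fin n × Fin n => aR p.1 p.2 - aR p.2 p.1)
        ∪ (Set.range fun p : Fin n × Fin n => bL p.1 p.2 - cL p.1 p.2)
        ∪ (Set.range fun p : Fin n × Fin n => bR p.1 p.2 - cR p.1 p.2)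
        ∪ (Set.range fun p : Fin n × Fin n => X p.1 p.2 - Complex.I • Y p.1 p.2)))
    (hA : A = Submodule.span ℂ
      (Set.range fun p : Fin n × Fin n => X p.1 p.2 - Complex.I • Y p.1 p.2)) :
    (∀ u ∈ K, ∀ v ∈ K, ⁅u, v⁆ ∈ K) ∧
    A ≤ K ∧
    (∀ u ∈ A, ∀ v ∈ A, ⁅u, v⁆ = 0) ∧
    (∀ u ∈ K, ∀ v ∈ A, ⁅u, v⁆ ∈ A) :=
  stmt_13_general n aL aR bL bR cL cR X Y C hbLbL hcLcL haLaL hbLcL haLbL haLcL hbRbR hcRcR haRaR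
    hbRcR haRbR haRcR haLaR haLbR haLcR hbLaR hbLbR hbLcR hcLaR hcLbR hcLcR hXX hYY hXY haLX haLY
    haRX haRY hbLY hbLX hcLX hcLY hbRX hbRY hcRY hcRX K A hK hA
end
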